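/- arXiv:1501.00780 — 11 statements merged into one kernel-verified Lean document; each statement's English description precedes it below -/
import Mathlib

section
/- In the group G = H × S determined by a c-groupoid (S, H, σ, f) with multiplication (a,x)·(b,y) = (aσ_x(b)f(xθb, y), (xθb)∘y), the multiplication is associative. -/
/-- A c-groupoid `(S, H, σ, f)`: a groupoid `S` with identity `e`, a group `H`
acting on `S` on the right via `θ`, a map `σ : S → H → H` and a map
`f : S → S → H` satisfying axioms (1)–(9). -/
structure CGroupoid (S : Type*) (H : Type*) [Group H] where
  op : S → S → S
  e : S
  θ : S → H → S
  σ : S → H → H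
  f : S → S → H
  op_idr : ∀ x, op x e = x
  op_idl : ∀ x, op e x = x
  θ_one : ∀ x, θ x 1 = x
  θ_mul : ∀ x h₁ h₂, θ x (h₁ * h₂) = θ (θ x h₁) h₂
  ax1 : ∀ x y, op x y = y → x = e
  ax2 : ∀ x, ∃ x', op x' x = e
  ax3 : ∀ h, σ e h = h
  ax4r : ∀ x, f x e = 1
  ax4l : ∀ x, f e x = 1
  ax5 : ∀ x h₁ h₂, σ x (h₁ * h₂) = σ x h₁ * σ (θ x h₁) h₂
  ax6 : ∀ x y z, op (op x y) z = op (θ x (f y z)) (op y z)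
  ax7 : ∀ x y h, θ (op x y) h = op (θ x (σ y h)) (θ y h)
  ax8 : ∀ x y z, f x y * f (op x y) z = σ x (f y z) * f (θ x (f y z)) (op y z)
  ax9 : ∀ x y h, f x y * σ (op x y) h = σ x (σ y h) * f (θ x (σ y h)) (θ y h)

namespace CGroupoid

variable {S H : Type*} [Group H]

/-- The multiplication `(a,x)·(b,y) = (aσ_x(b)f(xθb, y), (xθb)∘y)` on `G = H × S`. -/
def mul (C : CGroupoid S H) (p q : H × S) : H × S :=
  (p.1 * C.σ p.2 q.1 * C.f (C.θ p.2 q.1) q.2, C.op (C.θ p.2 q.1) q.2)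

/-- `β^n(x,a)`: `β¹(x,a) = x`, `β^{r+1}(x,a) = (β^r(x,a)θa)∘x`. -/
def beta (C : CGroupoid S H) (x : S) (a : H) : ℕ → S
  | 0 => C.e
  | 1 => x
  | n + 2 => C.op (C.θ (C.beta x a (n + 1)) a) x

/-- `g^n(x,a)`: `g¹(x,a) = a`,
`g^{n+1}(x,a) = g^n(x,a)·σ_{β^n(x,a)}(a)·f(β^n(x,a)θa, x)`. -/
def g (C : CGroupoid S H) (x : S) (a : H) : ℕ → H
  | 0 => 1
  | 1 => a
  | n + 2 => C.g x a (n + 1) * C.σ (C.beta x a (n + 1)) a *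
      C.f (C.θ (C.beta x a (n + 1)) a) x

/-- `n`-th power of an element of `G = H × S` under `C.mul`. -/
def pow (C : CGroupoid S H) (p : H × S) : ℕ → H × S
  | 0 => (1, C.e)
  | n + 1 => C.mul (C.pow p n) p

/-- `[aσ_x(a)]_n`: `[aσ_x(a)]_0 = a`, `[aσ_x(a)]_n = a·σ_x([aσ_x(a)]_{n-1})`. -/
def brk (C : CGroupoid S H) (x : S) (a : H) : ℕ → H
  | 0 => a
  | n + 1 => a * C.σ x (C.brk x a n)

end CGroupoid
/-- In `G = H × S` determined by a c-groupoid, the multiplication is associative. -/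
theorem cgroupoid_mul_assoc {S H : Type*} [Group H] (C : CGroupoid S H) :
    ∀ p q r : H × S, C.mul (C.mul p q) r = C.mul p (C.mul q r) := by
  rintro ⟨a, x⟩ ⟨b, y⟩ ⟨c, z⟩
  simp only [CGroupoid.mul]
  refine Prod.ext ?_ ?_
  · show a * C.σ x b * C.f (C.θ x b) y * C.σ (C.op (C.θ x b) y) c *
        C.f (C.θ (C.op (C.θ x b) y) c) z =
      a * C.σ x (b * C.σ y c * C.f (C.θ y c) z) *
        C.f (C.θ x (b * C.σ y c * C.f (C.θ y c) z)) (C.op (C.θ y c) z)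
    simp only [mul_assoc]
    rw [← mul_assoc (C.f (C.θ x b) y), C.ax9, C.ax7, mul_assoc (C.σ (C.θ x b) (C.σ y c)), C.ax8,
      C.ax5, C.ax5, C.θ_mul, C.θ_mul]
    simp only [mul_assoc]
  · show C.op (C.θ (C.op (C.θ x b) y) c) z =
      C.op (C.θ x (b * C.σ y c * C.f (C.θ y c) z)) (C.op (C.θ y c) z)
    rw [C.ax7, C.ax6, C.θ_mul, C.θ_mul]
end

section
/- In the group G = H × S determined by a c-groupoid (S, H, σ, f), every element (a, x) has a two-sided inverse. -/
namespace CGroupoid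
variable {S H : Type*} [Group H]

lemma sigma_one' (C : CGroupoid S H) (x : S) : C.σ x 1 = 1 := by
  have h := C.ax5 x 1 1
  rw [one_mul, C.θ_one] at h
  exact (left_eq_mul.mp h)

lemma theta_e' (C : CGroupoid S H) (h : H) : C.θ C.e h = C.e := by
  have h7 := C.ax7 C.e C.e h
  rw [C.op_idl, C.ax3] at h7
  exact C.ax1 _ _ h7.symm

lemma mul_one' (C : CGroupoid S H) (p : H × S) : C.mul p (1, C.e) = p := by
  obtain ⟨a, x⟩ := p
  simp [mul, C.sigma_one', C.θ_one, C.ax4r, C.op_idr]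

lemma one_mul' (C : CGroupoid S H) (p : H × S) : C.mul (1, C.e) p = p := by
  obtain ⟨a, x⟩ := p
  simp [mul, C.ax3, C.theta_e', C.ax4l, C.op_idl]

lemma mul_assoc' (C : CGroupoid S H) (p q r : H × S) :
    C.mul (C.mul p q) r = C.mul p (C.mul q r) := by
  obtain ⟨a, x⟩ := p; obtain ⟨b, y⟩ := q; obtain ⟨c, z⟩ := r
  simp only [mul]
  refine Prod.ext ?_ ?_
  · show a * C.σ x b * C.f (C.θ x b) y * C.σ (C.op (C.θ x b) y) c *
        C.f (C.θ (C.op (C.θ x b) y) c) z = _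
    rw [mul_assoc (a * C.σ x b), C.ax9, C.ax7, ← C.θ_mul]
    simp only [mul_assoc]
    rw [C.ax8]
    simp only [C.ax5, C.θ_mul, mul_assoc]
  · show C.op (C.θ (C.op (C.θ x b) y) c) z = _
    rw [C.ax7, ← C.θ_mul, C.ax6, ← C.θ_mul]

lemma exists_left_inv (C : CGroupoid S H) (p : H × S) :
    ∃ q : H × S, C.mul q p = (1, C.e) := by
  obtain ⟨a, x⟩ := p
  obtain ⟨x', hx'⟩ := C.ax2 x
  set y := C.θ x' a⁻¹ with hy
  have hya : C.θ y a = x' := by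
    rw [hy, ← C.θ_mul, inv_mul_cancel, C.θ_one]
  refine ⟨((C.σ y a * C.f x' x)⁻¹, y), ?_⟩
  simp [mul, hya, hx', mul_assoc]

end CGroupoid

/-- In `G = H × S` determined by a c-groupoid, every element has a two-sided inverse. -/
theorem cgroupoid_exists_inverse {S H : Type*} [Group H] (C : CGroupoid S H) :
    ∀ p : H × S, ∃ q : H × S, C.mul p q = (1, C.e) ∧ C.mul q p = (1, C.e) := by
  intro p
  obtain ⟨q, hq⟩ := C.exists_left_inv p
  obtain ⟨r, hr⟩ := C.exists_left_inv q
  have hpq : C.mul p q = (1, C.e) := by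
    have h1 : C.mul r (C.mul q (C.mul p q)) = C.mul r q := by
      rw [← C.mul_assoc' q p q, hq, C.one_mul']
    rw [← C.mul_assoc' r q (C.mul p q), hr, C.one_mul'] at h1
    exact h1
  exact ⟨q, hpq, hq⟩
end

section
/- In the group G = H × S determined by a c-groupoid (S, H, σ, f), the set {(1, x) : x ∈ S} is a right transversal of the subgroup H × {e} in G, i.e., every element of G lies in exactly one right coset (H × {e})·(1, x). -/
/-- In `G = H × S` determined by a c-groupoid, the set `{(1, x) : x ∈ S}` is a right
transversal of `H × {e}` in `G`: every element of `G` lies in exactly one right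
coset `(H × {e})·(1, x)`. -/
theorem cgroupoid_right_transversal {S H : Type*} [Group H] (C : CGroupoid S H) :
    ∀ p : H × S, ∃! x : S, ∃ h : H, p = C.mul (h, C.e) (1, x) := by
  have key : ∀ (h : H) (x : S), C.mul (h, C.e) (1, x) = (h, x) := by
    intro h x
    simp [CGroupoid.mul, C.ax3, C.θ_one, C.ax4l, C.op_idl]
  intro p
  refine ⟨p.2, ⟨p.1, ?_⟩, ?_⟩
  · rw [key]
  · rintro y ⟨h, hy⟩
    rw [key] at hy
    simp [hy]
end

section
/- Let (S, H, σ, f) be a c-groupoid, x ∈ S, a ∈ H. Define β¹(x,a) = x, β^{r+1}(x,a) = (β^r(x,a)θa)∘x, and g¹(x,a) = a, g^{n+1}(x,a) = g^n(x,a)·σ_{β^n(x,a)}(a)·f(β^n(x,a)θa, x). Then in the group G = H × S determined by the c-groupoid, (a, x)^n = (g^n(x,a), β^n(x,a)) for every n ≥ 1. -/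
/-- In `G = H × S` determined by a c-groupoid,
`(a, x)^n = (g^n(x,a), β^n(x,a))` for every `n ≥ 1`. -/
theorem cgroupoid_pow_eq {S H : Type*} [Group H] (C : CGroupoid S H)
    (x : S) (a : H) : ∀ n : ℕ, 1 ≤ n →
      C.pow (a, x) n = (C.g x a n, C.beta x a n) := by
  have hθe : ∀ h : H, C.θ C.e h = C.e := by
    intro h
    have h7 := C.ax7 C.e C.e h
    rw [C.op_idl, C.ax3] at h7
    exact C.ax1 _ _ h7.symm
  intro n hn
  induction n with
  | zero => omega
  | succ m ih =>
    match m, ih with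
    | 0, _ =>
      simp [CGroupoid.pow, CGroupoid.mul, CGroupoid.g, CGroupoid.beta, C.ax3,
        hθe, C.ax4l, C.op_idl]
    | k + 1, ih =>
      have h := ih (by omega)
      show C.mul (C.pow (a, x) (k + 1)) (a, x) = _
      rw [h]
      rfl
end

section
/- Let (S, H, σ, f) be a c-groupoid, x ∈ S, a ∈ H, and let β^n(x,a), g^n(x,a) be defined as in the power formula (a,x)^n = (g^n(x,a), β^n(x,a)). Then for all m, n ≥ 1: g^{n+m}(x,a) = g^n(x,a)·σ_{β^n(x,a)}(g^m(x,a))·f(β^n(x,a)θg^m(x,a), β^m(x,a)). -/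
namespace CGroupoid

variable {S H : Type*} [Group H]

lemma pair_succ (C : CGroupoid S H) (x : S) (a : H) :
    ∀ n : ℕ, 1 ≤ n → (C.g x a (n + 1), C.beta x a (n + 1)) =
      C.mul (C.g x a n, C.beta x a n) (a, x) := by
  rintro (_ | k) h
  · omega
  · simp [g, beta, mul]

lemma pair_add (C : CGroupoid S H) (x : S) (a : H) :
    ∀ m : ℕ, 1 ≤ m → ∀ n : ℕ, 1 ≤ n →
      (C.g x a (n + m), C.beta x a (n + m)) =
        C.mul (C.g x a n, C.beta x a n) (C.g x a m, C.beta x a m) := by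
  intro m
  induction m with
  | zero => omega
  | succ k ih =>
    intro _ n hn
    rcases Nat.eq_or_lt_of_le (Nat.one_le_iff_ne_zero.mpr (Nat.succ_ne_zero k)) with h | h
    · obtain rfl : k = 0 := by omega
      simpa [g, beta] using C.pair_succ x a n hn
    · have hk : 1 ≤ k := by omega
      have : n + (k + 1) = (n + k) + 1 := by ring
      rw [this, C.pair_succ x a (n + k) (by omega), ih hk n hn, C.mul_assoc',
        ← C.pair_succ x a k hk]

end CGroupoid

/-- For all `m, n ≥ 1`:
`g^{n+m}(x,a) = g^n(x,a)·σ_{β^n(x,a)}(g^m(x,a))·f(β^n(x,a)θg^m(x,a), β^m(x,a))`. -/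
theorem cgroupoid_g_add {S H : Type*} [Group H] (C : CGroupoid S H)
    (x : S) (a : H) : ∀ m n : ℕ, 1 ≤ m → 1 ≤ n →
      C.g x a (n + m) = C.g x a n * C.σ (C.beta x a n) (C.g x a m) *
        C.f (C.θ (C.beta x a n) (C.g x a m)) (C.beta x a m) := by
  intro m n hm hn
  have := congrArg Prod.fst (C.pair_add x a m hm n hn)
  simpa [CGroupoid.mul] using this
end

section
/- Let (S, H, σ, f) be a c-groupoid, x ∈ S, a ∈ H. Define [aσ_x(a)]_0 = a, [aσ_x(a)]_1 = aσ_x(a), and [aσ_x(a)]_n = a·σ_x([aσ_x(a)]_{n-1}). Then for m ≥ 2, β^m(x,a) = ((...((xθ[aσ_x(a)]_{m-2}) ∘ (xθ[aσ_x(a)]_{m-3})) ∘ ...) ∘ (xθ[aσ_x(a)]_0)) ∘ x. -/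
namespace CGroupoid

variable {S H : Type*} [Group H]

/-- Auxiliary sequence `h_s`: `h_0 = σ_x a`, `h_{s+1} = σ_{xθ[aσ_x(a)]_s}(h_s)`. -/
def hseq (C : CGroupoid S H) (x : S) (a : H) : ℕ → H
  | 0 => C.σ x a
  | s + 1 => C.σ (C.θ x (C.brk x a s)) (C.hseq x a s)

lemma brk_hseq (C : CGroupoid S H) (x : S) (a : H) :
    ∀ s, C.brk x a s * C.hseq x a s = C.brk x a (s + 1) := by
  intro s
  induction s with
  | zero => simp [brk, hseq]
  | succ s ih =>
    have key : C.brk x a (s + 2)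
        = C.brk x a (s + 1) * C.σ (C.θ x (C.brk x a s)) (C.hseq x a s) := by
      calc C.brk x a (s + 2) = a * C.σ x (C.brk x a (s + 1)) := rfl
        _ = a * C.σ x (C.brk x a s * C.hseq x a s) := by rw [ih]
        _ = a * (C.σ x (C.brk x a s) * C.σ (C.θ x (C.brk x a s)) (C.hseq x a s)) := by
            rw [C.ax5]
        _ = _ := by rw [← mul_assoc]; rfl
    rw [key]; rfl

/-- Shifted left-nested product. -/
def R (C : CGroupoid S H) (x : S) (a : H) (s n : ℕ) : S :=
  List.foldl C.op (C.θ x (C.brk x a (n + s)))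
    ((List.range n).reverse.map fun j => C.θ x (C.brk x a (j + s)))

lemma R_succ (C : CGroupoid S H) (x : S) (a : H) (s n : ℕ) :
    C.R x a s (n + 1) = C.op (C.R x a (s + 1) n) (C.θ x (C.brk x a s)) := by
  simp only [R, List.range_succ_eq_map, List.reverse_cons, List.map_append,
    List.foldl_append, List.map_cons, List.map_nil, List.foldl_cons, List.foldl_nil,
    List.map_reverse, List.map_map]
  have h1 : n + 1 + s = n + (s + 1) := by omega
  rw [h1]
  congr 2
  · congr 1
    refine List.map_congr_left fun j _ => ?_
    simp only [Function.comp_apply, Nat.succ_eq_add_one]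
    congr 2
    omega
  · simp [brk]

lemma theta_R (C : CGroupoid S H) (x : S) (a : H) :
    ∀ n s, C.θ (C.R x a s n) (C.hseq x a s) = C.R x a (s + 1) n := by
  intro n
  induction n with
  | zero =>
    intro s
    show C.θ (C.θ x (C.brk x a (0 + s))) (C.hseq x a s) = C.θ x (C.brk x a (0 + (s + 1)))
    rw [Nat.zero_add, Nat.zero_add, ← C.θ_mul, C.brk_hseq]
  | succ n ih =>
    intro s
    rw [R_succ, C.ax7, R_succ]
    have h1 : C.σ (C.θ x (C.brk x a s)) (C.hseq x a s) = C.hseq x a (s + 1) := rfl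
    rw [h1, ih (s + 1), ← C.θ_mul, C.brk_hseq]

lemma beta_R (C : CGroupoid S H) (x : S) (a : H) :
    ∀ n, C.beta x a (n + 2) = C.op (C.R x a 0 n) x := by
  intro n
  induction n with
  | zero => simp [beta, R, brk]
  | succ n ih =>
    show C.op (C.θ (C.beta x a (n + 2)) a) x = _
    rw [ih, C.ax7, R_succ]
    have h1 : C.σ x a = C.hseq x a 0 := rfl
    have h2 : C.θ x a = C.θ x (C.brk x a 0) := rfl
    rw [h1, h2, theta_R]

end CGroupoid

/-- For `m ≥ 2`, `β^m(x,a)` equals the left-nested product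
`((...((xθ[aσ_x(a)]_{m-2}) ∘ (xθ[aσ_x(a)]_{m-3})) ∘ ...) ∘ (xθ[aσ_x(a)]_0)) ∘ x`. -/
theorem cgroupoid_beta_bracket {S H : Type*} [Group H] (C : CGroupoid S H)
    (x : S) (a : H) : ∀ m : ℕ, 2 ≤ m →
      C.beta x a m =
        List.foldl C.op (C.θ x (C.brk x a (m - 2)))
          (((List.range (m - 2)).reverse.map fun j => C.θ x (C.brk x a j)) ++ [x]) := by
  intro m hm
  obtain ⟨n, rfl⟩ : ∃ n, m = n + 2 := ⟨m - 2, by omega⟩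
  have h2 : n + 2 - 2 = n := by omega
  rw [h2, C.beta_R x a n, List.foldl_append]
  simp only [List.foldl_cons, List.foldl_nil]
  simp [CGroupoid.R]
end

section
/- Let (S, ∘) be a right loop with identity e. For y, z ∈ S, the map f(y,z): S → S defined by the equation f(y,z)(x) ∘ (y∘z) = (x∘y)∘z is a well-defined bijection of S fixing e, i.e., f(y,z) ∈ Sym(S \ {e}) ⊆ Sym(S). -/
/-- A right loop: a set `S` with a binary operation `∘` and a two-sided identity `e`
such that for all `x, y ∈ S` the equation `X ∘ x = y` has a unique solution `X`. -/
structure RightLoop (S : Type*) where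
  op : S → S → S
  e : S
  op_idr : ∀ x, op x e = x
  op_idl : ∀ x, op e x = x
  rightSolv : ∀ x y, ∃! z, op z x = y
/-- For a right loop `(S, ∘)` and `y, z ∈ S`, the right inner mapping `f(y,z)`
defined by `f(y,z)(x) ∘ (y∘z) = (x∘y)∘z` is a well-defined bijection of `S`
fixing `e`, i.e. `f(y,z) ∈ Sym(S \ {e}) ⊆ Sym(S)`. -/
theorem rightLoop_inner_mapping {S : Type*} (L : RightLoop S) (y z : S) :
    ∃ F : S → S,
      (∀ x, L.op (F x) (L.op y z) = L.op (L.op x y) z) ∧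
      Function.Bijective F ∧ F L.e = L.e ∧
      (∀ F' : S → S, (∀ x, L.op (F' x) (L.op y z) = L.op (L.op x y) z) → F' = F) := by
  have cancel : ∀ a b c : S, L.op a c = L.op b c → a = b := by
    intro a b c h
    obtain ⟨w, hw, huniq⟩ := L.rightSolv c (L.op b c)
    exact (huniq a h).trans (huniq b rfl).symm
  choose F hF hFu using fun x => L.rightSolv (L.op y z) (L.op (L.op x y) z)
  refine ⟨F, hF, ⟨?_, ?_⟩, ?_, ?_⟩
  · intro a b hab
    have : L.op (L.op a y) z = L.op (L.op b y) z := by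
      rw [← hF a, ← hF b, hab]
    exact cancel a b y (cancel _ _ z this)
  · intro u
    obtain ⟨a, ha, _⟩ := L.rightSolv z (L.op u (L.op y z))
    obtain ⟨x, hx, _⟩ := L.rightSolv y a
    refine ⟨x, cancel _ _ (L.op y z) ?_⟩
    rw [hF x, hx, ha]
  · have := hF L.e
    rw [L.op_idl] at this
    have h2 : L.op L.e (L.op y z) = L.op y z := L.op_idl _
    exact cancel _ _ _ (this.trans h2.symm)
  · intro F' h
    funext x
    exact cancel _ _ _ ((h x).trans (hF x).symm)
end

section
/- Let (S, ∘) be a right loop with identity e, h ∈ Sym(S) fixing e, and y ∈ S. Then the map σ_y(h): S → S defined by the equation h(x∘y) = σ_y(h)(x) ∘ h(y) is a well-defined bijection of S fixing e. -/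
/-- For a right loop `(S, ∘)`, `h ∈ Sym(S)` fixing `e`, and `y ∈ S`, the map
`σ_y(h)` defined by `h(x∘y) = σ_y(h)(x) ∘ h(y)` is a well-defined bijection of `S`
fixing `e`. -/
theorem rightLoop_sigma {S : Type*} (L : RightLoop S) (h : S → S)
    (hb : Function.Bijective h) (he : h L.e = L.e) (y : S) :
    ∃ F : S → S,
      (∀ x, L.op (F x) (h y) = h (L.op x y)) ∧
      Function.Bijective F ∧ F L.e = L.e ∧
      (∀ F' : S → S, (∀ x, L.op (F' x) (h y) = h (L.op x y)) → F' = F) := by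
  -- right translation by any a is bijective
  have trans_bij : ∀ a : S, Function.Bijective (fun z => L.op z a) := by
    intro a
    constructor
    · intro u v huv
      obtain ⟨w, hw, hu⟩ := L.rightSolv a (L.op u a)
      exact (hu u rfl).trans (hu v huv.symm).symm
    · intro w
      obtain ⟨z, hz, _⟩ := L.rightSolv a w
      exact ⟨z, hz⟩
  choose F hF using fun x => (L.rightSolv (h y) (h (L.op x y))).exists
  have uniq : ∀ x z, L.op z (h y) = h (L.op x y) → z = F x := fun x z hz =>
    (trans_bij (h y)).1 (hz.trans (hF x).symm)
  refine ⟨F, hF, ?_, ?_, ?_⟩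
  · -- F = (·∘ h y)⁻¹ ∘ h ∘ (·∘ y)
    constructor
    · intro u v huv
      have : h (L.op u y) = h (L.op v y) := by rw [← hF u, ← hF v, huv]
      exact (trans_bij y).1 (hb.1 this)
    · intro w
      obtain ⟨t, ht⟩ := hb.2 (L.op w (h y))
      obtain ⟨x, hx⟩ := (trans_bij y).2 t
      exact ⟨x, (uniq x w (by simp only at hx; rw [hx, ht])).symm⟩
  · exact (uniq L.e L.e (by rw [L.op_idl, L.op_idl])).symm
  · intro F' hF'
    funext x
    exact uniq x (F' x) (hF' x)
end

section
/- Let (S, ∘) be a right loop with identity e. Then σ_y(h₁h₂) = σ_y(h₁)·σ_{h₁(y)}(h₂) for all y ∈ S and all h₁, h₂ ∈ Sym(S) fixing e, where σ_y(h) is defined by h(x∘y) = σ_y(h)(x)∘h(y). -/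
/-- For a right loop `(S, ∘)`: `σ_y(h₁h₂) = σ_y(h₁)·σ_{h₁(y)}(h₂)` for all `y ∈ S`
and all permutations `h₁, h₂` of `S` fixing `e`, where `σ_y(h)` is characterized by
`h(x∘y) = σ_y(h)(x) ∘ h(y)` (products of permutations taken in application order). -/
theorem rightLoop_sigma_mul {S : Type*} (L : RightLoop S)
    (sig : S → Equiv.Perm S → Equiv.Perm S)
    (hsig : ∀ (y : S) (h : Equiv.Perm S), h L.e = L.e →
      ∀ x, L.op (sig y h x) (h y) = h (L.op x y)) :
    ∀ (y : S) (h₁ h₂ : Equiv.Perm S), h₁ L.e = L.e → h₂ L.e = L.e →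
      sig y (h₁.trans h₂) = (sig y h₁).trans (sig (h₁ y) h₂) := by
  intro y h₁ h₂ he₁ he₂
  ext x
  have he₁₂ : (h₁.trans h₂) L.e = L.e := by simp [he₁, he₂]
  have h1 := hsig y (h₁.trans h₂) he₁₂ x
  have h2 : L.op (sig (h₁ y) h₂ (sig y h₁ x)) ((h₁.trans h₂) y)
      = (h₁.trans h₂) (L.op x y) := by
    simp only [Equiv.trans_apply]
    rw [hsig (h₁ y) h₂ he₂ (sig y h₁ x), hsig y h₁ he₁ x]
  obtain ⟨z, _, hz⟩ := L.rightSolv ((h₁.trans h₂) y) ((h₁.trans h₂) (L.op x y))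
  simp only [Equiv.trans_apply]
  rw [hz _ h1, hz _ h2]
end

section
/- In the Diffie–Hellman-style key exchange over the general extension G = H × S of a c-groupoid: for x ∈ S, a ∈ H, and private exponents m, n ≥ 1, Alice's key K_A = (β^n(x,a)θg^m(x,a))∘β^m(x,a) equals Bob's key K_B = (β^m(x,a)θg^n(x,a))∘β^n(x,a), both equal to β^{m+n}(x,a). -/
section Aux

variable {S H : Type*} [Group H] (C : CGroupoid S H)

lemma CGroupoid.theta_e (h : H) : C.θ C.e h = C.e := by
  apply C.ax1 (C.θ C.e h) (C.θ C.e h)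
  have h7 := C.ax7 C.e C.e h
  rw [C.op_idl, C.ax3] at h7
  exact h7.symm

lemma CGroupoid.sigma_one (x : S) : C.σ x 1 = 1 := by
  have h5 := C.ax5 x 1 1
  rw [one_mul, C.θ_one] at h5
  have := mul_left_cancel (a := C.σ x 1) (b := (1 : H)) (c := C.σ x 1)
    (by rw [mul_one]; exact h5)
  exact this.symm

lemma CGroupoid.mul_one'_s15 (p : H × S) : C.mul p (1, C.e) = p := by
  obtain ⟨a, x⟩ := p
  simp [CGroupoid.mul, C.θ_one, C.sigma_one, C.ax4r, C.op_idr]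

lemma CGroupoid.mul_assoc'_s15 (p q r : H × S) :
    C.mul (C.mul p q) r = C.mul p (C.mul q r) := by
  obtain ⟨a, x⟩ := p
  obtain ⟨b, y⟩ := q
  obtain ⟨c, z⟩ := r
  simp only [CGroupoid.mul, Prod.mk.injEq]
  refine ⟨?_, ?_⟩
  · -- first components
    rw [C.ax5 x (b * C.σ y c) (C.f (C.θ y c) z), C.ax5 x b (C.σ y c), C.θ_mul,
      C.θ_mul]
    have h9 := C.ax9 (C.θ x b) y c
    have h7 := C.ax7 (C.θ x b) y c
    have h8 := C.ax8 (C.θ (C.θ x b) (C.σ y c)) (C.θ y c) z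
    rw [h7]
    calc a * C.σ x b * C.f (C.θ x b) y * C.σ (C.op (C.θ x b) y) c *
          C.f (C.op (C.θ (C.θ x b) (C.σ y c)) (C.θ y c)) z
        = a * C.σ x b * (C.f (C.θ x b) y * C.σ (C.op (C.θ x b) y) c) *
          C.f (C.op (C.θ (C.θ x b) (C.σ y c)) (C.θ y c)) z := by group
      _ = a * C.σ x b * (C.σ (C.θ x b) (C.σ y c) *
          C.f (C.θ (C.θ x b) (C.σ y c)) (C.θ y c)) *
          C.f (C.op (C.θ (C.θ x b) (C.σ y c)) (C.θ y c)) z := by rw [h9]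
      _ = a * C.σ x b * C.σ (C.θ x b) (C.σ y c) *
          (C.f (C.θ (C.θ x b) (C.σ y c)) (C.θ y c) *
          C.f (C.op (C.θ (C.θ x b) (C.σ y c)) (C.θ y c)) z) := by group
      _ = a * C.σ x b * C.σ (C.θ x b) (C.σ y c) *
          (C.σ (C.θ (C.θ x b) (C.σ y c)) (C.f (C.θ y c) z) *
          C.f (C.θ (C.θ (C.θ x b) (C.σ y c)) (C.f (C.θ y c) z))
            (C.op (C.θ y c) z)) := by rw [h8]
      _ = a * (C.σ x b * C.σ (C.θ x b) (C.σ y c) *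
          C.σ (C.θ (C.θ x b) (C.σ y c)) (C.f (C.θ y c) z)) *
          C.f (C.θ (C.θ x (b * C.σ y c)) (C.f (C.θ y c) z))
            (C.op (C.θ y c) z) := by rw [C.θ_mul x b (C.σ y c)]; group
  · -- second components
    rw [C.ax7 (C.θ x b) y c, C.ax6, C.θ_mul, C.θ_mul]

lemma CGroupoid.pow_eq (x : S) (a : H) :
    ∀ n : ℕ, C.pow (a, x) n = (C.g x a n, C.beta x a n)
  | 0 => rfl
  | 1 => by
    show C.mul (C.pow (a, x) 0) (a, x) = _
    rw [CGroupoid.pow_eq x a 0]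
    simp only [CGroupoid.mul, CGroupoid.g, CGroupoid.beta]
    rw [C.theta_e, C.ax3, C.ax4l, C.op_idl, one_mul, mul_one]
  | (n + 2) => by
    show C.mul (C.pow (a, x) (n + 1)) (a, x) = _
    rw [CGroupoid.pow_eq x a (n + 1)]
    simp only [CGroupoid.mul, CGroupoid.g, CGroupoid.beta]

lemma CGroupoid.pow_add (p : H × S) (m : ℕ) :
    ∀ n : ℕ, C.pow p (m + n) = C.mul (C.pow p m) (C.pow p n)
  | 0 => by rw [Nat.add_zero]; exact (C.mul_one'_s15 _).symm
  | (n + 1) => by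
    show C.mul (C.pow p (m + n)) p = _
    rw [CGroupoid.pow_add p m n, C.mul_assoc'_s15]
    rfl

end Aux

/-- Key exchange over the general extension `G = H × S`: for private exponents
`m, n ≥ 1`, Alice's key `K_A = (β^n(x,a)θg^m(x,a))∘β^m(x,a)` equals Bob's key
`K_B = (β^m(x,a)θg^n(x,a))∘β^n(x,a)`, and both equal `β^{m+n}(x,a)`. -/
theorem cgroupoid_key_exchange {S H : Type*} [Group H] (C : CGroupoid S H)
    (x : S) (a : H) : ∀ m n : ℕ, 1 ≤ m → 1 ≤ n →
      C.op (C.θ (C.beta x a n) (C.g x a m)) (C.beta x a m) =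
        C.op (C.θ (C.beta x a m) (C.g x a n)) (C.beta x a n) ∧
      C.op (C.θ (C.beta x a n) (C.g x a m)) (C.beta x a m) =
        C.beta x a (m + n) := by
  intro m n _ _
  have key : ∀ k l : ℕ,
      C.op (C.θ (C.beta x a k) (C.g x a l)) (C.beta x a l) = C.beta x a (k + l) := by
    intro k l
    have h := C.pow_add (a, x) k l
    rw [C.pow_eq, C.pow_eq, C.pow_eq] at h
    exact (congrArg Prod.snd h).symm
  refine ⟨?_, ?_⟩
  · rw [key n m, key m n, Nat.add_comm]
  · rw [key n m, Nat.add_comm]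
end

section
/- Let S = {e, x₁, ..., x₁₅} with operation x_i ∘ x_j = x_i for i ≠ j, x_i ∘ x_i = e, and e as identity. Then for i ≠ j the right inner mapping f(x_i, x_j) is the transposition swapping x_i and x_j and fixing all other elements; consequently the right inner mapping group G_S equals Sym(S \ {e}). -/
/-- The operation on `S = {e, x₁, …, x₁₅}` (encoded as `Fin 16` with `e = 0`):
`e` is a two-sided identity, `x_i ∘ x_j = x_i` for `i ≠ j`, and `x_i ∘ x_i = e`. -/
def exOp (i j : Fin 16) : Fin 16 :=
  if i = 0 then j else if j = 0 then i else if i = j then 0 else i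

/-!
Right multiplication `R_c` by any `c` is the transposition `(e c)` (trivial for `c = e`), so
the defining equation `F w ∘ (y ∘ z) = (w ∘ y) ∘ z` reads `R_{y∘z} F = R_z R_y`, i.e.
`f(y, z) = (e (y∘z)) (e z) (e y)`. For distinct `i, j ≠ e` this is `(e x_i) (e x_j) (e x_i)`,
the conjugate of `(e x_j)` by `(e x_i)`, namely `(x_i x_j)`. Every inner mapping fixes `e`, and
the transpositions of `S \ {e}` generate `Sym(S \ {e})`.
-/

open Equiv Function Subgroup MulAction

def IsRightInnerMapping {α : Type*} (op : α → α → α) (y z : α) (F : α → α) : Prop :=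
  ∀ w, op (F w) (op y z) = op (op w y) z

theorem IsRightInnerMapping.apply_eq_of_isLeftIdentity {α : Type*} {op : α → α → α}
    {e y z : α} {F : α → α} (hF : IsRightInnerMapping op y z F) (he : ∀ a, op e a = a)
    (hcancel : ∀ c, Injective (op · c)) : F e = e :=
  hcancel (op y z) <| by simp only [hF e, he]

theorem Equiv.Perm.stabilizer_le_closure_swap {α : Type*} [Fintype α] [DecidableEq α] (a : α) :
    stabilizer (Perm α) a ≤ closure {σ | ∃ x y, x ≠ a ∧ y ≠ a ∧ x ≠ y ∧ σ = swap x y} := by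
  intro σ hσ
  have hσa : σ a = a := hσ
  have hrange : σ ∈ (Perm.ofSubtype : Perm {x // x ≠ a} →* Perm α).range :=
    Perm.mem_range_ofSubtype_iff.2 fun x hx hxa =>
      Perm.mem_support.1 hx (hxa ▸ hσa)
  rw [MonoidHom.range_eq_map, ← Perm.closure_isSwap, MonoidHom.map_closure] at hrange
  refine closure_mono ?_ hrange
  rintro _ ⟨_, ⟨x, y, hxy, rfl⟩, rfl⟩
  exact ⟨x, y, x.2, y.2, Subtype.coe_ne_coe.2 hxy, Perm.ofSubtype_swap_eq x y⟩

theorem exOp_eq_swap (a i : Fin 16) : exOp a i = swap 0 i a := by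
  unfold exOp
  rw [swap_apply_def]
  split_ifs <;> simp_all

theorem exOp_zero_left (a : Fin 16) : exOp 0 a = a := by
  simp [exOp]

theorem exOp_right_injective (c : Fin 16) : Injective (exOp · c) := by
  simpa only [exOp_eq_swap] using (swap 0 c).injective

theorem isRightInnerMapping_exOp_iff {y z : Fin 16} {F : Perm (Fin 16)} :
    IsRightInnerMapping exOp y z F ↔ F = swap 0 (exOp y z) * swap 0 z * swap 0 y := by
  simp only [IsRightInnerMapping, exOp_eq_swap, swap_apply_eq_iff, Perm.ext_iff, Perm.mul_apply]

theorem isRightInnerMapping_exOp_iff_of_ne {i j : Fin 16} (hi : i ≠ 0) (hj : j ≠ 0) (hij : i ≠ j)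
    {F : Perm (Fin 16)} : IsRightInnerMapping exOp i j F ↔ F = swap i j := by
  have hprod : exOp i j = i := by simp [exOp, hi, hj, hij]
  rw [isRightInnerMapping_exOp_iff, hprod, swap_comm 0 j, swap_mul_swap_mul_swap hj hij.symm]

/-- For `i ≠ j` (both nonidentity), the right inner mapping `f(x_i, x_j)`
(the unique permutation `F` with `F(w) ∘ (x_i∘x_j) = (w∘x_i)∘x_j`) is the
transposition swapping `x_i` and `x_j`; consequently the right inner mapping group
`G_S` (generated by all right inner mappings) is `Sym(S \ {e})`, i.e. the
stabilizer of `e` in `Sym(S)`. -/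
theorem exInnerMappings_swap_and_GS :
    (∀ i j : Fin 16, i ≠ 0 → j ≠ 0 → i ≠ j →
      ∀ F : Equiv.Perm (Fin 16),
        (∀ w, exOp (F w) (exOp i j) = exOp (exOp w i) j) → F = Equiv.swap i j) ∧
    Subgroup.closure
        {π : Equiv.Perm (Fin 16) | ∃ y z, ∀ w, exOp (π w) (exOp y z) = exOp (exOp w y) z}
      = MulAction.stabilizer (Equiv.Perm (Fin 16)) (0 : Fin 16) := by
  refine ⟨fun i j hi hj hij F hF => (isRightInnerMapping_exOp_iff_of_ne hi hj hij).1 hF,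
    le_antisymm ?_ ?_⟩
  · rw [closure_le]
    rintro π ⟨y, z, hπ⟩
    exact IsRightInnerMapping.apply_eq_of_isLeftIdentity (F := π) hπ exOp_zero_left
      exOp_right_injective
  · refine (Perm.stabilizer_le_closure_swap 0).trans (closure_mono ?_)
    rintro _ ⟨x, y, hx, hy, hxy, rfl⟩
    exact ⟨x, y, (isRightInnerMapping_exOp_iff_of_ne hx hy hxy).2 rfl⟩
end
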